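/- Witness point excluded from the Hölder dome: let x ∈ ℝ^n and u ∈ ℝ^m with u ≠ y, set c = (1/2)(y + u), r = (1/2)‖y − u‖₂ > 0, and assume D(u) < P(x) < (1/2)‖y‖₂² = D(u) + 2r². Define u₀ = c + (1/r²)(P(x) − D(u) − r²)(y − c). Then |P(x) − D(u) − r²| < r², ‖u₀ − c‖₂ ≤ r, ⟨y − c, u₀ − c⟩ = P(x) − D(u) − r², and D(u₀) > P(x); consequently ⟨A x, u₀⟩ > λ‖x‖₁. -/

import Mathlib

/-- Euclidean norm of a vector in ℝ^m. -/
noncomputable def norm2 {m : ℕ} (v : Fin m → ℝ) : ℝ := Real.sqrt (∑ i, v i ^ 2)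

/-- ℓ1 norm of a vector in ℝ^n. -/
def norm1 {n : ℕ} (x : Fin n → ℝ) : ℝ := ∑ i, |x i|

/-- Canonical inner product on ℝ^m. -/
def dot {m : ℕ} (a u : Fin m → ℝ) : ℝ := ∑ i, a i * u i

/-- Lasso primal objective P(x) = (1/2)‖y − Ax‖₂² + λ‖x‖₁. -/
noncomputable def Pobj {m n : ℕ} (A : Matrix (Fin m) (Fin n) ℝ) (y : Fin m → ℝ)
    (lam : ℝ) (x : Fin n → ℝ) : ℝ :=
  (1 / 2) * norm2 (y - A.mulVec x) ^ 2 + lam * norm1 x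

/-- Lasso dual objective D(u) = (1/2)‖y‖₂² − (1/2)‖y − u‖₂². -/
noncomputable def Dobj {m : ℕ} (y u : Fin m → ℝ) : ℝ :=
  (1 / 2) * norm2 y ^ 2 - (1 / 2) * norm2 (y - u) ^ 2

/-- Dual feasibility: u ∈ Δ iff |⟨a_i, u⟩| ≤ λ for every column a_i of A. -/
def feas {m n : ℕ} (A : Matrix (Fin m) (Fin n) ℝ) (lam : ℝ) (u : Fin m → ℝ) : Prop :=
  ∀ i : Fin n, |dot (fun j => A j i) u| ≤ lam

lemma norm2_sq {m : ℕ} (v : Fin m → ℝ) : norm2 v ^ 2 = ∑ i, v i ^ 2 :=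
  Real.sq_sqrt (Finset.sum_nonneg fun i _ => sq_nonneg _)

lemma sum_sub_sq {m : ℕ} (a b : Fin m → ℝ) :
    ∑ i, (a i - b i) ^ 2 = ∑ i, a i ^ 2 - 2 * ∑ i, a i * b i + ∑ i, b i ^ 2 := by
  rw [Finset.mul_sum, ← Finset.sum_sub_distrib, ← Finset.sum_add_distrib]
  exact Finset.sum_congr rfl fun i _ => by ring

/-- witness point excluded from the Hölder dome: with u ≠ y,
c = (1/2)(y + u), r = (1/2)‖y − u‖₂ > 0, D(u) < P(x) < (1/2)‖y‖₂² = D(u) + 2r², the point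
u₀ = c + (1/r²)(P(x) − D(u) − r²)(y − c) satisfies |P(x) − D(u) − r²| < r², ‖u₀ − c‖₂ ≤ r,
⟨y − c, u₀ − c⟩ = P(x) − D(u) − r², D(u₀) > P(x), and ⟨A x, u₀⟩ > λ‖x‖₁. -/
theorem witness_point_excluded_from_holder_dome (m n : ℕ) (hm : 0 < m) (hn : 0 < n)
    (A : Matrix (Fin m) (Fin n) ℝ) (y : Fin m → ℝ) (lam : ℝ) (hlam : 0 < lam)
    (x : Fin n → ℝ) (u : Fin m → ℝ) (huy : u ≠ y)
    (c : Fin m → ℝ) (hc : c = fun i => (y i + u i) / 2)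
    (r : ℝ) (hr : r = (1 / 2) * norm2 (y - u))
    (h1 : Dobj y u < Pobj A y lam x)
    (h2 : Pobj A y lam x < (1 / 2) * norm2 y ^ 2)
    (u₀ : Fin m → ℝ)
    (hu₀ : u₀ = fun i => c i + (1 / r ^ 2) * (Pobj A y lam x - Dobj y u - r ^ 2) * (y i - c i)) :
    0 < r ∧
    |Pobj A y lam x - Dobj y u - r ^ 2| < r ^ 2 ∧
    norm2 (u₀ - c) ≤ r ∧
    dot (y - c) (u₀ - c) = Pobj A y lam x - Dobj y u - r ^ 2 ∧
    Pobj A y lam x < Dobj y u₀ ∧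
    lam * norm1 x < dot (A.mulVec x) u₀ := by
  -- positivity of ∑ (y-u)²
  have hSnn : (0:ℝ) ≤ ∑ i, (y i - u i) ^ 2 := Finset.sum_nonneg fun i _ => sq_nonneg _
  have hS : (0:ℝ) < ∑ i, (y i - u i) ^ 2 := by
    obtain ⟨j, hj⟩ : ∃ j, u j ≠ y j := by
      by_contra h; push_neg at h; exact huy (funext h)
    refine Finset.sum_pos' (fun i _ => sq_nonneg _) ⟨j, Finset.mem_univ j, ?_⟩
    have : y j - u j ≠ 0 := sub_ne_zero.2 (Ne.symm hj)
    positivity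
  have hymu : norm2 (y - u) ^ 2 = ∑ i, (y i - u i) ^ 2 := by
    rw [norm2_sq]; exact Finset.sum_congr rfl fun i _ => rfl
  have hr2 : r ^ 2 = (∑ i, (y i - u i) ^ 2) / 4 := by
    rw [hr, mul_pow, hymu]; ring
  have hr2pos : (0:ℝ) < r ^ 2 := by rw [hr2]; linarith
  have hrnn : (0:ℝ) ≤ r := by
    rw [hr]; unfold norm2; positivity
  have hrpos : (0:ℝ) < r := lt_of_le_of_ne hrnn (by rintro h; rw [← h] at hr2pos; simp at hr2pos)
  have hr2ne : r ^ 2 ≠ 0 := ne_of_gt hr2pos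
  have hD : Dobj y u = (1/2) * norm2 y ^ 2 - 2 * r ^ 2 := by
    unfold Dobj; rw [hymu, hr2]; ring
  set t := Pobj A y lam x - Dobj y u - r ^ 2 with ht
  have ht1 : -r ^ 2 < t := by simp only [ht]; linarith
  have ht2 : t < r ^ 2 := by simp only [ht]; linarith [hD, h2]
  have habs : |t| < r ^ 2 := abs_lt.2 ⟨ht1, ht2⟩
  have htsq : t ^ 2 < r ^ 2 * r ^ 2 := by nlinarith [abs_nonneg t, sq_abs t]
  have hu₀i : ∀ i, u₀ i = c i + (1 / r ^ 2) * t * (y i - c i) := fun i => by rw [hu₀]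
  have hycsq : ∑ i, (y i - c i) ^ 2 = r ^ 2 := by
    calc ∑ i, (y i - c i) ^ 2 = ∑ i, (y i - u i) ^ 2 / 4 :=
          Finset.sum_congr rfl fun i _ => by rw [hc]; ring
      _ = (∑ i, (y i - u i) ^ 2) / 4 := by rw [Finset.sum_div]
      _ = r ^ 2 := hr2.symm
  have hu0c : ∑ i, (u₀ i - c i) ^ 2 = t ^ 2 / r ^ 2 := by
    calc ∑ i, (u₀ i - c i) ^ 2 = ∑ i, ((1 / r ^ 2) * t) ^ 2 * (y i - c i) ^ 2 :=
          Finset.sum_congr rfl fun i _ => by rw [hu₀i i]; ring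
      _ = ((1 / r ^ 2) * t) ^ 2 * (∑ i, (y i - c i) ^ 2) := by rw [Finset.mul_sum]
      _ = t ^ 2 / r ^ 2 := by rw [hycsq]; field_simp
  have hnorm_le : norm2 (u₀ - c) ≤ r := by
    unfold norm2
    have h1' : (∑ i, (u₀ - c) i ^ 2) = t ^ 2 / r ^ 2 := by
      rw [← hu0c]; exact Finset.sum_congr rfl fun i _ => rfl
    rw [h1']
    have hle : t ^ 2 / r ^ 2 ≤ r ^ 2 := by
      rw [div_le_iff₀ hr2pos]; nlinarith
    calc Real.sqrt (t ^ 2 / r ^ 2) ≤ Real.sqrt (r ^ 2) := Real.sqrt_le_sqrt hle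
      _ = r := by rw [Real.sqrt_sq hrnn]
  have hdot : dot (y - c) (u₀ - c) = t := by
    unfold dot
    calc ∑ i, (y - c) i * (u₀ - c) i
        = ∑ i, (1 / r ^ 2) * t * (y i - c i) ^ 2 :=
          Finset.sum_congr rfl fun i _ => by
            show (y i - c i) * (u₀ i - c i) = _
            rw [hu₀i i]; ring
      _ = (1 / r ^ 2) * t * (∑ i, (y i - c i) ^ 2) := by rw [Finset.mul_sum]
      _ = t := by rw [hycsq]; field_simp
  have hyu0sq : norm2 (y - u₀) ^ 2 = (1 - t / r ^ 2) ^ 2 * r ^ 2 := by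
    rw [norm2_sq]
    calc ∑ i, (y - u₀) i ^ 2 = ∑ i, (1 - t / r ^ 2) ^ 2 * (y i - c i) ^ 2 :=
          Finset.sum_congr rfl fun i _ => by
            show (y i - u₀ i) ^ 2 = _
            rw [hu₀i i]; field_simp; ring
      _ = (1 - t / r ^ 2) ^ 2 * (∑ i, (y i - c i) ^ 2) := by rw [Finset.mul_sum]
      _ = _ := by rw [hycsq]
  have hDu0 : Dobj y u₀ = (1/2) * norm2 y ^ 2 - (1/2) * (r ^ 2 - 2 * t + t ^ 2 / r ^ 2) := by
    unfold Dobj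
    rw [hyu0sq]
    have : (1 - t / r ^ 2) ^ 2 * r ^ 2 = r ^ 2 - 2 * t + t ^ 2 / r ^ 2 := by
      field_simp; ring
    rw [this]
  have hPD : Pobj A y lam x < Dobj y u₀ := by
    have hdiv : t ^ 2 / r ^ 2 < r ^ 2 := by rw [div_lt_iff₀ hr2pos]; exact htsq
    have hPval : Pobj A y lam x = (1/2) * norm2 y ^ 2 - r ^ 2 + t := by
      simp only [ht]; rw [hD]; ring
    rw [hPval, hDu0]; linarith
  refine ⟨hrpos, habs, hnorm_le, hdot, hPD, ?_⟩
  -- weak duality step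
  have hquad : (0:ℝ) ≤ ∑ i, ((y i - A.mulVec x i) - u₀ i) ^ 2 :=
    Finset.sum_nonneg fun i _ => sq_nonneg _
  have hexp := sum_sub_sq (fun i => y i - A.mulVec x i) u₀
  have hnAx : norm2 (y - A.mulVec x) ^ 2 = ∑ i, (y i - A.mulVec x i) ^ 2 := by
    rw [norm2_sq]; exact Finset.sum_congr rfl fun i _ => rfl
  have hny : norm2 y ^ 2 = ∑ i, y i ^ 2 := norm2_sq y
  have hnyu0 : norm2 (y - u₀) ^ 2 = ∑ i, (y i - u₀ i) ^ 2 := by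
    rw [norm2_sq]; exact Finset.sum_congr rfl fun i _ => rfl
  have hexp2 := sum_sub_sq y u₀
  have hDu0' : Dobj y u₀ = (∑ i, y i * u₀ i) - (1/2) * ∑ i, u₀ i ^ 2 := by
    unfold Dobj; rw [hny, hnyu0, hexp2]; ring
  have hdotsplit : ∑ i, (y i - A.mulVec x i) * u₀ i
      = (∑ i, y i * u₀ i) - dot (A.mulVec x) u₀ := by
    unfold dot; rw [← Finset.sum_sub_distrib]
    exact Finset.sum_congr rfl fun i _ => by ring
  have hPdef : Pobj A y lam x = (1/2) * norm2 (y - A.mulVec x) ^ 2 + lam * norm1 x := rfl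
  have hkey : dot (A.mulVec x) u₀ ≥ Dobj y u₀ - Pobj A y lam x + lam * norm1 x := by
    rw [hPdef, hnAx, hDu0']
    have := hexp
    rw [hdotsplit] at this
    linarith
  linarith
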